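/- arXiv:1701.08689 — 3 statements merged into one kernel-verified Lean document; each statement's English description precedes it below -/
import Mathlib

section
/- Let S and T be commutative noetherian local rings with common residue field k. Then dim(S ×_k T) = max{dim S, dim T}. -/
open IsLocalRing

universe u

def fiberProd {S T k : Type u} [CommRing S] [CommRing T] [CommRing k]
    (f : S →+* k) (g : T →+* k) : Subring (S × T) :=
  RingHom.eqLocus (f.comp (RingHom.fst S T)) (g.comp (RingHom.snd S T))

noncomputable def rdepth (R : Type u) [CommRing R] : ℕ∞ :=
  sSup {n : ℕ∞ | ∃ rs : List R, (rs.length : ℕ∞) = n ∧ (∀ r ∈ rs, r ∈ nonunits R) ∧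
    RingTheory.Sequence.IsRegular R rs}

def IsRegularLocalRing' (R : Type u) [CommRing R] : Prop :=
  IsLocalRing R ∧ IsNoetherianRing R ∧ ∃ s : Finset R,
    ((Ideal.span (s : Set R) : Ideal R) : Set R) = nonunits R ∧
    (s.card : WithBot ℕ∞) = ringKrullDim R

def extVanishes (R : Type u) [CommRing R] (M N : Type u) [AddCommGroup M] [Module R M]
    [AddCommGroup N] [Module R N] (i : ℕ) : Prop :=
  Subsingleton (((Ext R (ModuleCat.{u} R) i).obj (Opposite.op (ModuleCat.of R M))).obj
    (ModuleCat.of R N))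

def injectiveDimLE (R : Type u) [CommRing R] (N : Type u) [AddCommGroup N] [Module R N]
    (n : ℕ) : Prop :=
  ∀ (M : Type u) [AddCommGroup M] [Module R M], ∀ i : ℕ, n < i → extVanishes R M N i

def projectiveDimLE (R : Type u) [CommRing R] (M : Type u) [AddCommGroup M] [Module R M]
    (n : ℕ) : Prop :=
  ∀ (N : Type u) [AddCommGroup N] [Module R N], ∀ i : ℕ, n < i → extVanishes R M N i

def IsGorensteinLocalRing (R : Type u) [CommRing R] : Prop :=
  IsLocalRing R ∧ IsNoetherianRing R ∧ ∃ n : ℕ, injectiveDimLE R R n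

structure HypersurfacePresentation (R : Type u) [CommRing R] : Type (u + 1) where
  Q : Type u
  [instQ : CommRing Q]
  regQ : IsRegularLocalRing' Q
  f : Q
  mem : f ∈ nonunits Q
  iso : AdicCompletion (Ideal.span (nonunits R)) R ≃+* Q ⧸ Ideal.span {f}

def IsHypersurfaceRing (R : Type u) [CommRing R] : Prop :=
  Nonempty (HypersurfacePresentation R)

def IsCohenMacaulayLocal (R : Type u) [CommRing R] : Prop :=
  (rdepth R : WithBot ℕ∞) = ringKrullDim R

variable {S T k : Type u} [CommRing S] [CommRing T] [Field k]
  [IsLocalRing S] [IsLocalRing T] [IsNoetherianRing S] [IsNoetherianRing T]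

lemma ringKrullDim_le_max_quotient {R : Type u} [CommRing R] (I J : Ideal R)
    (hIJ : I * J = ⊥) :
    ringKrullDim R ≤ max (ringKrullDim (R ⧸ I)) (ringKrullDim (R ⧸ J)) := by
  have key : ∀ (K : Ideal R) (l : LTSeries (PrimeSpectrum R)),
      K ≤ (l.head).asIdeal → (l.length : WithBot ℕ∞) ≤ ringKrullDim (R ⧸ K) := by
    intro K l hK
    have hKle : ∀ i, K ≤ (l i).asIdeal := fun i =>
      hK.trans (l.monotone (Fin.zero_le i) : l.head ≤ l i)
    have hsurj : Function.Surjective (Ideal.Quotient.mk K) := Ideal.Quotient.mk_surjective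
    have hcm : ∀ i, ((l i).asIdeal.map (Ideal.Quotient.mk K)).comap (Ideal.Quotient.mk K)
        = (l i).asIdeal := by
      intro i
      rw [Ideal.comap_map_of_surjective _ hsurj, ← RingHom.ker_eq_comap_bot, Ideal.mk_ker,
        sup_eq_left]
      exact hKle i
    let l' : LTSeries (PrimeSpectrum (R ⧸ K)) :=
      ⟨l.length, fun i =>
        ⟨(l i).asIdeal.map (Ideal.Quotient.mk K),
          Ideal.map_isPrime_of_surjective hsurj (by rw [Ideal.mk_ker]; exact hKle i)⟩,
        by
          intro i
          have hlt : (l i.castSucc).asIdeal < (l i.succ).asIdeal := l.step i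
          constructor
          · exact Ideal.map_mono hlt.le
          · intro hle
            have := (Ideal.comap_mono hle).trans_eq (hcm i.castSucc)
            rw [hcm i.succ] at this
            exact hlt.2 this⟩
    exact Order.LTSeries.length_le_krullDim l'
  rw [ringKrullDim, Order.krullDim]
  apply iSup_le
  intro l
  have hbot : I * J ≤ (l.head).asIdeal := by rw [hIJ]; exact bot_le
  rcases ((l.head).isPrime.mul_le).mp hbot with h | h
  · exact le_max_of_le_left (key I l h)
  · exact le_max_of_le_right (key J l h)

/-- `dim (S ×_k T) = max (dim S) (dim T)`. -/
theorem stmt_2 (πS : S →+* k) (πT : T →+* k)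
    (hπS : Function.Surjective πS) (hπT : Function.Surjective πT)
    (hkS : RingHom.ker πS = maximalIdeal S) (hkT : RingHom.ker πT = maximalIdeal T) :
    ringKrullDim ↥(fiberProd πS πT) = max (ringKrullDim S) (ringKrullDim T) := by
  set R := fiberProd πS πT with hR
  have hmem : ∀ x : S × T, x ∈ R ↔ πS x.1 = πT x.2 := fun x => Iff.rfl
  let p : ↥R →+* S := (RingHom.fst S T).comp R.subtype
  let q : ↥R →+* T := (RingHom.snd S T).comp R.subtype
  have hp : Function.Surjective p := by
    intro s
    obtain ⟨t, ht⟩ := hπT (πS s)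
    exact ⟨⟨(s, t), by simpa [hmem] using ht.symm⟩, rfl⟩
  have hq : Function.Surjective q := by
    intro t
    obtain ⟨s, hs⟩ := hπS (πT t)
    exact ⟨⟨(s, t), by simpa [hmem] using hs⟩, rfl⟩
  have hprod : RingHom.ker p * RingHom.ker q = ⊥ := by
    rw [eq_bot_iff, Ideal.mul_le]
    intro a ha b hb
    have ha' : (a : S × T).1 = 0 := ha
    have hb' : (b : S × T).2 = 0 := hb
    have : ((a * b : ↥R) : S × T) = 0 := by
      have hh : ((a * b : ↥R) : S × T) = (a : S × T) * (b : S × T) := rfl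
      rw [hh]
      simp [Prod.ext_iff, ha', hb']
    rw [Ideal.mem_bot]
    exact Subtype.ext (by simpa using this)
  apply le_antisymm
  · have h1 : ringKrullDim (↥R ⧸ RingHom.ker p) = ringKrullDim S :=
      ringKrullDim_eq_of_ringEquiv (RingHom.quotientKerEquivOfSurjective hp)
    have h2 : ringKrullDim (↥R ⧸ RingHom.ker q) = ringKrullDim T :=
      ringKrullDim_eq_of_ringEquiv (RingHom.quotientKerEquivOfSurjective hq)
    calc ringKrullDim ↥R
        ≤ max (ringKrullDim (↥R ⧸ RingHom.ker p)) (ringKrullDim (↥R ⧸ RingHom.ker q)) :=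
          ringKrullDim_le_max_quotient _ _ hprod
      _ = max (ringKrullDim S) (ringKrullDim T) := by rw [h1, h2]
  · exact max_le (ringKrullDim_le_of_surjective p hp) (ringKrullDim_le_of_surjective q hq)
end

section
/- Let S and T be commutative noetherian local rings with common residue field k, with S ≠ k and T ≠ k. Then S ×_k T is Cohen-Macaulay if and only if dim(S ×_k T) ≤ 1 and both S and T are Cohen-Macaulay with dim S = dim(S ×_k T) = dim T. -/
set_option maxHeartbeats 1000000
set_option synthInstance.maxHeartbeats 400000

open IsLocalRing

universe u

/-! ### Auxiliary general lemmas -/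

open Pointwise in
lemma FPAux.mem_smul_top_iff {A : Type u} [CommRing A] (r z : A) :
    z ∈ (r • (⊤ : Submodule A A)) ↔ ∃ w, r * w = z := by
  constructor
  · intro h
    have : z ∈ r • ((⊤ : Submodule A A) : Set A) := by
      rwa [← Submodule.coe_pointwise_smul, SetLike.mem_coe]
    obtain ⟨w, -, hw⟩ := this
    exact ⟨w, hw⟩
  · rintro ⟨w, rfl⟩
    exact Submodule.smul_mem_pointwise_smul w r ⊤ trivial

namespace FPAux

open Pointwise

section general
variable {A : Type u} [CommRing A]

lemma isSMulRegular_of_ker {a : A} (h : ∀ w, a * w = 0 → w = 0) : IsSMulRegular A a := by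
  intro w w' hww
  have : a * (w - w') = 0 := by
    have : a * w = a * w' := hww
    rw [mul_sub, this, sub_self]
  have := h _ this
  exact sub_eq_zero.1 this

lemma eq_zero_of_isSMulRegular {a : A} (h : IsSMulRegular A a) {w : A} (hw : a * w = 0) :
    w = 0 :=
  h (show a • w = a • 0 by simpa [smul_eq_mul] using hw)

lemma ofList_smul_top (rs : List A) : Ideal.ofList rs • (⊤ : Submodule A A) = Ideal.ofList rs := by
  rw [Ideal.smul_eq_mul, Ideal.mul_top]

lemma isRegular_singleton [Nontrivial A] {r : A} (hr : r ∈ nonunits A)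
    (h : IsSMulRegular A r) : RingTheory.Sequence.IsRegular A [r] := by
  rw [RingTheory.Sequence.isRegular_iff]
  refine ⟨?_, ?_⟩
  · rw [RingTheory.Sequence.isWeaklyRegular_cons_iff]
    exact ⟨h, .nil A _⟩
  · rw [ofList_smul_top]
    intro htop
    have : Ideal.ofList [r] = ⊤ := htop.symm
    rw [Ideal.ofList_singleton, Ideal.span_singleton_eq_top] at this
    exact hr this

lemma one_le_rdepth_iff [Nontrivial A] :
    1 ≤ rdepth A ↔ ∃ r ∈ nonunits A, IsSMulRegular A r := by
  constructor
  · intro h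
    by_contra hc
    push_neg at hc
    have : rdepth A ≤ 0 := by
      apply sSup_le
      rintro n ⟨rs, rfl, hnu, hreg⟩
      match rs with
      | [] => simp
      | r :: rs =>
        rw [RingTheory.Sequence.isRegular_cons_iff] at hreg
        exact absurd hreg.1 (hc r (hnu r (List.mem_cons_self)))
    exact absurd (h.trans this) (by simp)
  · rintro ⟨r, hr, hreg⟩
    apply le_sSup
    exact ⟨[r], by simp, by simpa using hr, isRegular_singleton hr hreg⟩

lemma rdepth_le_one_crit
    (h : ∀ x ∈ nonunits A, IsSMulRegular A x →
      ∀ y ∈ nonunits A, ¬ IsSMulRegular (QuotSMulTop x A) y) : rdepth A ≤ 1 := by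
  apply sSup_le
  rintro n ⟨rs, rfl, hnu, hreg⟩
  match rs with
  | [] => simp
  | [r] => simp
  | x :: y :: rs =>
    rw [RingTheory.Sequence.isRegular_cons_iff] at hreg
    obtain ⟨hx, hreg⟩ := hreg
    rw [RingTheory.Sequence.isRegular_cons_iff] at hreg
    exact absurd hreg.1 (h x (hnu x (by simp)) hx y (hnu y (by simp)))

lemma one_le_dim_of_lt {P Q : PrimeSpectrum A} (h : P < Q) : 1 ≤ ringKrullDim A := by
  have := Order.LTSeries.length_le_krullDim
    ((RelSeries.singleton _ P : LTSeries (PrimeSpectrum A)).snoc Q (by simpa using h))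
  simpa [ringKrullDim] using this

lemma two_le_dim_of_lt {P Q L : PrimeSpectrum A} (h1 : P < Q) (h2 : Q < L) :
    2 ≤ ringKrullDim A := by
  have := Order.LTSeries.length_le_krullDim
    (((RelSeries.singleton _ P : LTSeries (PrimeSpectrum A)).snoc Q (by simpa using h1)).snoc L (by simpa using h2))
  simpa [ringKrullDim] using this

lemma isNilpotent_of_dim_le_zero [IsLocalRing A] (h : ringKrullDim A ≤ 0) {x : A}
    (hx : x ∈ nonunits A) : IsNilpotent x := by
  rw [nilpotent_iff_mem_prime]
  intro J hJ
  have hle : J ≤ maximalIdeal A := le_maximalIdeal hJ.ne_top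
  rcases eq_or_lt_of_le hle with heq | hlt
  · rw [heq]; exact hx
  · exact absurd ((one_le_dim_of_lt (P := ⟨J, hJ⟩)
      (Q := ⟨maximalIdeal A, inferInstance⟩) hlt).trans h) (by decide)

lemma not_smulRegular_of_dim_le_zero [IsLocalRing A] (h : ringKrullDim A ≤ 0) {x : A}
    (hx : x ∈ nonunits A) : ¬ IsSMulRegular A x := by
  intro hreg
  obtain ⟨n, hn⟩ := isNilpotent_of_dim_le_zero h hx
  have hp := hreg.pow n
  rw [hn] at hp
  have h01 : (0 : A) • (1 : A) = (0 : A) • (0 : A) := by simp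
  exact one_ne_zero (hp h01)

lemma rdepth_eq_zero_of_dim_le_zero [IsLocalRing A] (h : ringKrullDim A ≤ 0) :
    rdepth A = 0 := by
  by_contra hne
  have h1 : 1 ≤ rdepth A := by
    rcases eq_or_ne (rdepth A) 0 with h0 | h0
    · exact absurd h0 hne
    · exact Order.one_le_iff_pos.2 (pos_iff_ne_zero.2 h0)
  obtain ⟨r, hr, hreg⟩ := one_le_rdepth_iff.1 h1
  exact not_smulRegular_of_dim_le_zero h hr hreg

lemma not_mem_minimal_of_regular {p : Ideal A} (hp : p ∈ minimalPrimes A) {x : A}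
    (hx : IsSMulRegular A x) : x ∉ p := by
  intro hxp
  have hprime : p.IsPrime := hp.1.1
  have h1 : algebraMap A (Localization p.primeCompl) x ∈ maximalIdeal _ :=
    (IsLocalization.AtPrime.to_map_mem_maximal_iff _ p x).2 hxp
  exact notMem_nonZeroDivisors_of_mem_mem_minimalPrimes hxp hp
    (mem_nonZeroDivisors_iff_right.2 fun z hz =>
      eq_zero_of_isSMulRegular hx (by rw [mul_comm]; exact hz))

lemma prime_eq_maximal_of_dim_le_one [IsLocalRing A] (h : ringKrullDim A ≤ 1) {x : A}
    (hx : IsSMulRegular A x) {p : Ideal A} (hp : p.IsPrime)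
    (hxp : x ∈ p) : p = maximalIdeal A := by
  obtain ⟨q, hq, hqp⟩ := Ideal.exists_minimalPrimes_le (bot_le (a := p))
  have hqprime : q.IsPrime := hq.1.1
  have hqlt : q < p :=
    lt_of_le_of_ne hqp (by rintro rfl; exact not_mem_minimal_of_regular hq hx hxp)
  by_contra hne
  have hplt : p < maximalIdeal A := lt_of_le_of_ne (le_maximalIdeal hp.ne_top) hne
  exact absurd ((two_le_dim_of_lt (P := ⟨q, hqprime⟩) (Q := ⟨p, hp⟩)
    (L := ⟨maximalIdeal A, inferInstance⟩) hqlt hplt).trans h) (by decide)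

lemma not_smulRegular_quot [IsLocalRing A] (h : ringKrullDim A ≤ 1) {x : A}
    (hxu : x ∈ nonunits A) (hx : IsSMulRegular A x) {y : A} (hyu : y ∈ nonunits A) :
    ¬ IsSMulRegular (QuotSMulTop x A) y := by
  intro hyreg
  have hnil : IsNilpotent (Ideal.Quotient.mk (Ideal.span {x}) y) := by
    rw [nilpotent_iff_mem_prime]
    intro J hJ
    have hcp : (J.comap (Ideal.Quotient.mk (Ideal.span {x}))).IsPrime := hJ.comap _
    have hxmem : x ∈ J.comap (Ideal.Quotient.mk (Ideal.span {x})) := by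
      simp [Ideal.mem_comap, Ideal.Quotient.eq_zero_iff_mem.2 (Ideal.subset_span rfl)]
    have heq := prime_eq_maximal_of_dim_le_one h hx hcp hxmem
    exact (heq ▸ hyu : y ∈ J.comap (Ideal.Quotient.mk (Ideal.span {x})))
  obtain ⟨n, hn⟩ := hnil
  rw [← map_pow, Ideal.Quotient.eq_zero_iff_mem, Ideal.mem_span_singleton] at hn
  obtain ⟨w, hw⟩ := hn
  have hall : ∀ z : QuotSMulTop x A, y ^ n • z = 0 := by
    intro z
    induction z using Submodule.Quotient.induction_on with
    | _ z =>
      rw [← Submodule.Quotient.mk_smul, Submodule.Quotient.mk_eq_zero]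
      rw [mem_smul_top_iff]
      exact ⟨w * z, by rw [← mul_assoc, ← hw]; simp [smul_eq_mul]⟩
  have hsub : Subsingleton (QuotSMulTop x A) :=
    ⟨fun a b => (hyreg.pow n) (by show y ^ n • a = y ^ n • b; rw [hall a, hall b])⟩
  have h1 : (1 : A) ∈ (x • (⊤ : Submodule A A)) := by
    rw [← Submodule.Quotient.mk_eq_zero]
    exact Subsingleton.elim _ _
  obtain ⟨w', hw'⟩ := (mem_smul_top_iff x 1).1 h1
  exact hxu (IsUnit.of_mul_eq_one w' hw')

lemma rdepth_le_one_of_dim_le_one [IsLocalRing A] (h : ringKrullDim A ≤ 1) :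
    rdepth A ≤ 1 :=
  rdepth_le_one_crit (fun _ hxu hx _ hyu => not_smulRegular_quot h hxu hx hyu)

lemma length_le_dim_of_surjective {A B : Type u} [CommRing A] [CommRing B] (f : A →+* B)
    (hf : Function.Surjective f) (p : LTSeries (PrimeSpectrum A))
    (hker : RingHom.ker f ≤ p.head.asIdeal) :
    (p.length : WithBot ℕ∞) ≤ ringKrullDim B := by
  have hmono : ∀ i, p.head ≤ p i := fun i => p.monotone (Fin.zero_le i)
  have hker' : ∀ i, RingHom.ker f ≤ (p i).asIdeal := fun i => hker.trans (hmono i)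
  let q : LTSeries (PrimeSpectrum B) :=
    { length := p.length
      toFun := fun i => ⟨Ideal.map f (p i).asIdeal,
        Ideal.map_isPrime_of_surjective hf (hker' i)⟩
      step := fun i => by
        have hle : (p i.castSucc).asIdeal ≤ (p i.succ).asIdeal := le_of_lt (p.step i)
        refine lt_of_le_of_ne (Ideal.map_mono hle) ?_
        intro heq
        have heq2 : Ideal.map f (p i.castSucc).asIdeal = Ideal.map f (p i.succ).asIdeal :=
          heq
        have h1 := Ideal.comap_map_of_surjective f hf (p i.castSucc).asIdeal
        have h2 := Ideal.comap_map_of_surjective f hf (p i.succ).asIdeal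
        rw [heq2, h2] at h1
        have : (p i.castSucc).asIdeal = (p i.succ).asIdeal := by
          have e1 : (p i.castSucc).asIdeal ⊔ Ideal.comap f ⊥ = (p i.castSucc).asIdeal :=
            sup_eq_left.2 (hker' _)
          have e2 : (p i.succ).asIdeal ⊔ Ideal.comap f ⊥ = (p i.succ).asIdeal :=
            sup_eq_left.2 (hker' _)
          rw [e2] at h1
          exact (h1.trans e1).symm
        exact absurd (PrimeSpectrum.ext this) (ne_of_lt (p.step i)) }
  exact Order.LTSeries.length_le_krullDim q

lemma one_le_of_pos {d : WithBot ℕ∞} (hd : 0 < d) : 1 ≤ d := by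
  cases d with
  | bot => exact absurd hd (by simp)
  | coe n =>
    have : (0 : ℕ∞) < n := by exact_mod_cast hd
    exact_mod_cast Order.one_le_iff_pos.2 this

end general

/-! ### Fiber product lemmas -/

section fp
variable {S T k : Type u} [CommRing S] [CommRing T] [Field k]
  [IsLocalRing S] [IsLocalRing T]
variable {πS : S →+* k} {πT : T →+* k}

omit [IsLocalRing S] [IsLocalRing T] in
lemma mem_fiberProd (x : S × T) : x ∈ fiberProd πS πT ↔ πS x.1 = πT x.2 := Iff.rfl

instance : Nontrivial ↥(fiberProd πS πT) :=
  ⟨0, 1, fun h => one_ne_zero (α := S) (congrArg (fun z => z.1.1) h).symm⟩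

variable (hkS : RingHom.ker πS = maximalIdeal S) (hkT : RingHom.ker πT = maximalIdeal T)

include hkS hkT in
lemma isUnit_fiberProd_iff (x : ↥(fiberProd πS πT)) :
    IsUnit x ↔ IsUnit (x : S × T).1 := by
  constructor
  · rintro hx
    obtain ⟨y, hy⟩ := isUnit_iff_exists_inv.1 hx
    refine isUnit_iff_exists_inv.2 ⟨(y : S × T).1, ?_⟩
    have := congrArg (fun z : ↥(fiberProd πS πT) => (z : S × T).1) hy
    simpa using this
  · intro hu
    have hc : πS (x : S × T).1 ≠ 0 := by
      intro h0
      have : (x : S × T).1 ∈ maximalIdeal S := hkS ▸ h0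
      exact (mem_maximalIdeal _).1 this hu
    have hu2 : IsUnit (x : S × T).2 := by
      by_contra hnu
      have : (x : S × T).2 ∈ maximalIdeal T := (mem_maximalIdeal _).2 hnu
      have h2 : πT (x : S × T).2 = 0 := by rw [← hkT] at this; exact this
      exact hc (((mem_fiberProd _).1 x.2).trans h2)
    obtain ⟨a, ha⟩ := isUnit_iff_exists_inv.1 hu
    obtain ⟨b, hb⟩ := isUnit_iff_exists_inv.1 hu2
    have hmem : (a, b) ∈ fiberProd πS πT := by
      rw [mem_fiberProd]
      have h1 : πS (x : S × T).1 * πS a = 1 := by rw [← map_mul, ha, map_one]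
      have h2 : πS (x : S × T).1 * πT b = 1 := by
        rw [(mem_fiberProd _).1 x.2, ← map_mul, hb, map_one]
      exact mul_left_cancel₀ hc (h1.trans h2.symm)
    refine isUnit_iff_exists_inv.2 ⟨⟨(a, b), hmem⟩, ?_⟩
    ext : 1
    exact Prod.ext ha hb

include hkS hkT in
lemma mem_nonunits_fiberProd_iff (x : ↥(fiberProd πS πT)) :
    x ∈ nonunits ↥(fiberProd πS πT) ↔ (x : S × T).1 ∈ maximalIdeal S := by
  rw [mem_nonunits_iff, isUnit_fiberProd_iff hkS hkT]
  exact not_iff_comm.1 (by rw [mem_maximalIdeal, mem_nonunits_iff, not_not])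

include hkS hkT in
lemma mem_nonunits_fiberProd_iff' (x : ↥(fiberProd πS πT)) :
    x ∈ nonunits ↥(fiberProd πS πT) ↔ (x : S × T).2 ∈ maximalIdeal T := by
  rw [mem_nonunits_fiberProd_iff hkS hkT, ← hkS, ← hkT]
  show πS _ = 0 ↔ πT _ = 0
  rw [(mem_fiberProd _).1 x.2]

include hkS hkT in
lemma isLocalRing_fiberProd : IsLocalRing ↥(fiberProd πS πT) := by
  apply IsLocalRing.of_nonunits_add
  intro a b ha hb
  rw [mem_nonunits_fiberProd_iff hkS hkT] at ha hb ⊢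
  exact Ideal.add_mem _ ha hb

end fp

section fp2
variable {S T k : Type u} [CommRing S] [CommRing T] [Field k]
variable {πS : S →+* k} {πT : T →+* k}

def projS (πS : S →+* k) (πT : T →+* k) : ↥(fiberProd πS πT) →+* S :=
  (RingHom.fst S T).comp (fiberProd πS πT).subtype

def projT (πS : S →+* k) (πT : T →+* k) : ↥(fiberProd πS πT) →+* T :=
  (RingHom.snd S T).comp (fiberProd πS πT).subtype

lemma projS_surjective (hπT : Function.Surjective πT) : Function.Surjective (projS πS πT) := by
  intro s
  obtain ⟨t, ht⟩ := hπT (πS s)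
  exact ⟨⟨(s, t), ht.symm⟩, rfl⟩

lemma projT_surjective (hπS : Function.Surjective πS) : Function.Surjective (projT πS πT) := by
  intro t
  obtain ⟨s, hs⟩ := hπS (πT t)
  exact ⟨⟨(s, t), hs⟩, rfl⟩

lemma dim_le_dim_fiberProd_left (hπT : Function.Surjective πT) :
    ringKrullDim S ≤ ringKrullDim ↥(fiberProd πS πT) :=
  ringKrullDim_le_of_surjective _ (projS_surjective hπT)

lemma dim_le_dim_fiberProd_right (hπS : Function.Surjective πS) :
    ringKrullDim T ≤ ringKrullDim ↥(fiberProd πS πT) :=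
  ringKrullDim_le_of_surjective _ (projT_surjective hπS)

lemma dim_fiberProd_le (hπS : Function.Surjective πS) (hπT : Function.Surjective πT) :
    ringKrullDim ↥(fiberProd πS πT) ≤ max (ringKrullDim S) (ringKrullDim T) := by
  show (⨆ (p : LTSeries (PrimeSpectrum ↥(fiberProd πS πT))), (p.length : WithBot ℕ∞)) ≤ _
  refine iSup_le fun p => ?_
  have hmul : RingHom.ker (projT πS πT) * RingHom.ker (projS πS πT) ≤ p.head.asIdeal := by
    refine (Ideal.mul_le).2 fun r hr s hs => ?_
    have hr2 : (r : S × T).2 = 0 := hr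
    have hs1 : (s : S × T).1 = 0 := hs
    have : r * s = 0 := by
      ext : 1
      exact Prod.ext (by simp [hs1]) (by simp [hr2])
    rw [this]
    exact Ideal.zero_mem _
  have hP : p.head.asIdeal.IsPrime := p.head.2
  rcases hP.mul_le.1 hmul with h | h
  · exact le_trans (length_le_dim_of_surjective (projT πS πT) (projT_surjective hπS) p h)
      (le_max_right _ _)
  · exact le_trans (length_le_dim_of_surjective (projS πS πT) (projS_surjective hπT) p h)
      (le_max_left _ _)

end fp2

section fp3
variable {S T k : Type u} [CommRing S] [CommRing T] [Field k]
  [IsLocalRing S] [IsLocalRing T]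
variable {πS : S →+* k} {πT : T →+* k}
variable (hkS : RingHom.ker πS = maximalIdeal S) (hkT : RingHom.ker πT = maximalIdeal T)

include hkS hkT in
lemma reg_fst (hS : maximalIdeal S ≠ ⊥) {x : ↥(fiberProd πS πT)}
    (hxu : x ∈ nonunits ↥(fiberProd πS πT)) (hx : IsSMulRegular ↥(fiberProd πS πT) x) :
    IsSMulRegular S (x : S × T).1 := by
  apply isSMulRegular_of_ker
  intro w hw
  by_cases hπ : πS w = 0
  · have hmem : ((w, (0 : T)) : S × T) ∈ fiberProd πS πT := by
      rw [mem_fiberProd]; simp [hπ]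
    have hxz : x * (⟨(w, 0), hmem⟩ : ↥(fiberProd πS πT)) = 0 := by
      apply Subtype.ext
      exact Prod.ext (by simpa using hw) (by simp)
    have hz0 := eq_zero_of_isSMulRegular hx hxz
    simpa using congrArg (fun v : ↥(fiberProd πS πT) => (v : S × T).1) hz0
  · exfalso
    have hwu : IsUnit w := by
      by_contra hnu
      have hwm : w ∈ RingHom.ker πS := by rw [hkS]; exact (mem_maximalIdeal _).2 hnu
      exact hπ hwm
    obtain ⟨ww, hww⟩ := isUnit_iff_exists_inv.1 hwu
    have ha0 : (x : S × T).1 = 0 := by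
      calc (x : S × T).1 = (x : S × T).1 * (w * ww) := by rw [hww, mul_one]
      _ = ((x : S × T).1 * w) * ww := by ring
      _ = 0 := by rw [hw, zero_mul]
    obtain ⟨s, hs⟩ := Submodule.nonzero_mem_of_bot_lt (bot_lt_iff_ne_bot.2 hS)
    have hsm : πS (s : S) = 0 := by
      have : (s : S) ∈ RingHom.ker πS := by rw [hkS]; exact s.2
      exact this
    have hmem : (((s : S), (0 : T)) : S × T) ∈ fiberProd πS πT := by
      rw [mem_fiberProd]; simp [hsm]
    have hxz : x * (⟨((s : S), 0), hmem⟩ : ↥(fiberProd πS πT)) = 0 := by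
      apply Subtype.ext
      exact Prod.ext (by simp [ha0]) (by simp)
    have hz0 := eq_zero_of_isSMulRegular hx hxz
    have : (s : S) = 0 := by
      simpa using congrArg (fun v : ↥(fiberProd πS πT) => (v : S × T).1) hz0
    exact hs (Subtype.ext this)

include hkS hkT in
lemma reg_snd (hT : maximalIdeal T ≠ ⊥) {x : ↥(fiberProd πS πT)}
    (hxu : x ∈ nonunits ↥(fiberProd πS πT)) (hx : IsSMulRegular ↥(fiberProd πS πT) x) :
    IsSMulRegular T (x : S × T).2 := by
  apply isSMulRegular_of_ker
  intro w hw
  by_cases hπ : πT w = 0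
  · have hmem : (((0 : S), w) : S × T) ∈ fiberProd πS πT := by
      rw [mem_fiberProd]; simp [hπ]
    have hxz : x * (⟨(0, w), hmem⟩ : ↥(fiberProd πS πT)) = 0 := by
      apply Subtype.ext
      exact Prod.ext (by simp) (by simpa using hw)
    have hz0 := eq_zero_of_isSMulRegular hx hxz
    simpa using congrArg (fun v : ↥(fiberProd πS πT) => (v : S × T).2) hz0
  · exfalso
    have hwu : IsUnit w := by
      by_contra hnu
      have hwm : w ∈ RingHom.ker πT := by rw [hkT]; exact (mem_maximalIdeal _).2 hnu
      exact hπ hwm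
    obtain ⟨ww, hww⟩ := isUnit_iff_exists_inv.1 hwu
    have ha0 : (x : S × T).2 = 0 := by
      calc (x : S × T).2 = (x : S × T).2 * (w * ww) := by rw [hww, mul_one]
      _ = ((x : S × T).2 * w) * ww := by ring
      _ = 0 := by rw [hw, zero_mul]
    obtain ⟨t, ht⟩ := Submodule.nonzero_mem_of_bot_lt (bot_lt_iff_ne_bot.2 hT)
    have htm : πT (t : T) = 0 := by
      have : (t : T) ∈ RingHom.ker πT := by rw [hkT]; exact t.2
      exact this
    have hmem : (((0 : S), (t : T)) : S × T) ∈ fiberProd πS πT := by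
      rw [mem_fiberProd]; simp [htm]
    have hxz : x * (⟨(0, (t : T)), hmem⟩ : ↥(fiberProd πS πT)) = 0 := by
      apply Subtype.ext
      exact Prod.ext (by simp) (by simp [ha0])
    have hz0 := eq_zero_of_isSMulRegular hx hxz
    have : (t : T) = 0 := by
      simpa using congrArg (fun v : ↥(fiberProd πS πT) => (v : S × T).2) hz0
    exact ht (Subtype.ext this)

include hkS hkT in
lemma one_le_rdepth_fiberProd_iff (hS : maximalIdeal S ≠ ⊥) (hT : maximalIdeal T ≠ ⊥) :
    1 ≤ rdepth ↥(fiberProd πS πT) ↔ (1 ≤ rdepth S ∧ 1 ≤ rdepth T) := by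
  rw [one_le_rdepth_iff, one_le_rdepth_iff, one_le_rdepth_iff]
  constructor
  · rintro ⟨x, hxu, hx⟩
    refine ⟨⟨(x : S × T).1, ?_, reg_fst hkS hkT hS hxu hx⟩,
      ⟨(x : S × T).2, ?_, reg_snd hkS hkT hT hxu hx⟩⟩
    · exact (mem_maximalIdeal _).1 ((mem_nonunits_fiberProd_iff hkS hkT x).1 hxu)
    · exact (mem_maximalIdeal _).1 ((mem_nonunits_fiberProd_iff' hkS hkT x).1 hxu)
  · rintro ⟨⟨r, hru, hr⟩, ⟨t, htu, ht⟩⟩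
    have hrm : πS r = 0 := by
      have : r ∈ RingHom.ker πS := by rw [hkS]; exact (mem_maximalIdeal _).2 hru
      exact this
    have htm : πT t = 0 := by
      have : t ∈ RingHom.ker πT := by rw [hkT]; exact (mem_maximalIdeal _).2 htu
      exact this
    have hmem : ((r, t) : S × T) ∈ fiberProd πS πT := by
      rw [mem_fiberProd]; simp [hrm, htm]
    refine ⟨⟨(r, t), hmem⟩, ?_, ?_⟩
    · rw [mem_nonunits_fiberProd_iff hkS hkT]
      exact (mem_maximalIdeal _).2 hru
    · apply isSMulRegular_of_ker
      intro z hz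
      have h1 : r * (z : S × T).1 = 0 := congrArg (fun v : ↥(fiberProd πS πT) => (v : S × T).1) hz
      have h2 : t * (z : S × T).2 = 0 := congrArg (fun v : ↥(fiberProd πS πT) => (v : S × T).2) hz
      exact Subtype.ext (Prod.ext (eq_zero_of_isSMulRegular hr h1)
        (eq_zero_of_isSMulRegular ht h2))

include hkS hkT in
lemma rdepth_fiberProd_le_one (hS : maximalIdeal S ≠ ⊥) (hT : maximalIdeal T ≠ ⊥) :
    rdepth ↥(fiberProd πS πT) ≤ 1 := by
  apply rdepth_le_one_crit
  intro x hxu hx y hyu hyreg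
  have ha : IsSMulRegular S (x : S × T).1 := reg_fst hkS hkT hS hxu hx
  have hb : IsSMulRegular T (x : S × T).2 := reg_snd hkS hkT hT hxu hx
  have hane : (x : S × T).1 ≠ 0 := by
    intro h0
    have : (1 : S) = 0 := eq_zero_of_isSMulRegular ha (by rw [h0, zero_mul])
    exact one_ne_zero this
  have hxm : πS (x : S × T).1 = 0 := by
    have : (x : S × T).1 ∈ RingHom.ker πS := by
      rw [hkS]; exact (mem_nonunits_fiberProd_iff hkS hkT x).1 hxu
    exact this
  have hmem : (((x : S × T).1, (0 : T)) : S × T) ∈ fiberProd πS πT := by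
    rw [mem_fiberProd]; simp [hxm]
  set z : ↥(fiberProd πS πT) := ⟨((x : S × T).1, 0), hmem⟩ with hzdef
  have hz1 : Submodule.Quotient.mk (p := (x • (⊤ : Submodule ↥(fiberProd πS πT)
      ↥(fiberProd πS πT)))) z ≠ 0 := by
    rw [Ne, Submodule.Quotient.mk_eq_zero, mem_smul_top_iff]
    rintro ⟨w, hwz⟩
    have h1 : (x : S × T).1 * (w : S × T).1 = (x : S × T).1 :=
      congrArg (fun v : ↥(fiberProd πS πT) => (v : S × T).1) hwz
    have h2 : (x : S × T).2 * (w : S × T).2 = 0 :=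
      congrArg (fun v : ↥(fiberProd πS πT) => (v : S × T).2) hwz
    have hw2 : (w : S × T).2 = 0 := eq_zero_of_isSMulRegular hb h2
    have hw1m : πS (w : S × T).1 = 0 := by
      have := (mem_fiberProd (πS := πS) (πT := πT) _).1 w.2
      rw [hw2] at this
      simpa using this
    have hsub : (x : S × T).1 * ((w : S × T).1 - 1) = 0 := by
      rw [mul_sub, h1, mul_one, sub_self]
    have hw1 : (w : S × T).1 = 1 := by
      have := eq_zero_of_isSMulRegular ha hsub
      linear_combination this
    rw [hw1] at hw1m
    simp at hw1m
  have hym : πS (y : S × T).1 = 0 := by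
    have : (y : S × T).1 ∈ RingHom.ker πS := by
      rw [hkS]; exact (mem_nonunits_fiberProd_iff hkS hkT y).1 hyu
    exact this
  have hcmem : (((y : S × T).1, (0 : T)) : S × T) ∈ fiberProd πS πT := by
    rw [mem_fiberProd]; simp [hym]
  have hkill : y • Submodule.Quotient.mk (p := (x • (⊤ : Submodule ↥(fiberProd πS πT)
      ↥(fiberProd πS πT)))) z = 0 := by
    rw [← Submodule.Quotient.mk_smul, Submodule.Quotient.mk_eq_zero, mem_smul_top_iff]
    refine ⟨⟨((y : S × T).1, 0), hcmem⟩, ?_⟩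
    apply Subtype.ext
    refine Prod.ext ?_ ?_
    · show (x : S × T).1 * (y : S × T).1 = ((y • z : ↥(fiberProd πS πT)) : S × T).1
      have : ((y • z : ↥(fiberProd πS πT)) : S × T).1 = (y : S × T).1 * (x : S × T).1 := rfl
      rw [this, mul_comm]
    · show (x : S × T).2 * 0 = ((y • z : ↥(fiberProd πS πT)) : S × T).2
      have : ((y • z : ↥(fiberProd πS πT)) : S × T).2 = (y : S × T).2 * 0 := rfl
      rw [this, mul_zero, mul_zero]
  have hz0 : y • (0 : QuotSMulTop x ↥(fiberProd πS πT)) = 0 := smul_zero y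
  exact hz1 (hyreg (hkill.trans hz0.symm))

end fp3

end FPAux

variable {S T k : Type u} [CommRing S] [CommRing T] [Field k]
  [IsLocalRing S] [IsLocalRing T] [IsNoetherianRing S] [IsNoetherianRing T]

/-- A non-trivial fiber product is Cohen-Macaulay iff it has dimension at most 1 and
`S` and `T` are Cohen-Macaulay with `dim S = dim (S ×_k T) = dim T`. -/
theorem stmt_4 (πS : S →+* k) (πT : T →+* k)
    (hπS : Function.Surjective πS) (hπT : Function.Surjective πT)
    (hkS : RingHom.ker πS = maximalIdeal S) (hkT : RingHom.ker πT = maximalIdeal T)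
    (hS : maximalIdeal S ≠ ⊥) (hT : maximalIdeal T ≠ ⊥) :
    IsCohenMacaulayLocal ↥(fiberProd πS πT) ↔
      (ringKrullDim ↥(fiberProd πS πT) ≤ 1 ∧
        IsCohenMacaulayLocal S ∧ IsCohenMacaulayLocal T ∧
        ringKrullDim S = ringKrullDim ↥(fiberProd πS πT) ∧
        ringKrullDim T = ringKrullDim ↥(fiberProd πS πT)) := by
  letI : IsLocalRing ↥(fiberProd πS πT) := FPAux.isLocalRing_fiberProd hkS hkT
  have hdS : ringKrullDim S ≤ ringKrullDim ↥(fiberProd πS πT) :=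
    FPAux.dim_le_dim_fiberProd_left hπT
  have hdT : ringKrullDim T ≤ ringKrullDim ↥(fiberProd πS πT) :=
    FPAux.dim_le_dim_fiberProd_right hπS
  have h0R : 0 ≤ ringKrullDim ↥(fiberProd πS πT) := ringKrullDim_nonneg_of_nontrivial
  have h0S : 0 ≤ ringKrullDim S := ringKrullDim_nonneg_of_nontrivial
  have h0T : 0 ≤ ringKrullDim T := ringKrullDim_nonneg_of_nontrivial
  have hdep1 : rdepth ↥(fiberProd πS πT) ≤ 1 := FPAux.rdepth_fiberProd_le_one hkS hkT hS hT
  have hiff := FPAux.one_le_rdepth_fiberProd_iff hkS hkT hS hT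
  rcases le_or_gt (ringKrullDim ↥(fiberProd πS πT)) 0 with hc | hc
  · -- dimension 0 case: both sides true
    have hdR0 : ringKrullDim ↥(fiberProd πS πT) = 0 := le_antisymm hc h0R
    have hdS0 : ringKrullDim S = 0 := le_antisymm (hdS.trans hc) h0S
    have hdT0 : ringKrullDim T = 0 := le_antisymm (hdT.trans hc) h0T
    have hrR : rdepth ↥(fiberProd πS πT) = 0 := FPAux.rdepth_eq_zero_of_dim_le_zero hdR0.le
    have hrS : rdepth S = 0 := FPAux.rdepth_eq_zero_of_dim_le_zero hdS0.le
    have hrT : rdepth T = 0 := FPAux.rdepth_eq_zero_of_dim_le_zero hdT0.le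
    unfold IsCohenMacaulayLocal
    rw [hrR, hrS, hrT, hdR0, hdS0, hdT0]
    simp
  · rcases le_or_gt (ringKrullDim ↥(fiberProd πS πT)) 1 with hc1 | hc1
    · -- dimension 1 case
      have hdR1 : ringKrullDim ↥(fiberProd πS πT) = 1 :=
        le_antisymm hc1 (FPAux.one_le_of_pos hc)
      constructor
      · intro hcm
        have hr1 : rdepth ↥(fiberProd πS πT) = 1 := by
          have h := hcm.trans hdR1
          exact_mod_cast h
        obtain ⟨h1S, h1T⟩ := hiff.1 hr1.ge
        have hdS1 : ringKrullDim S = 1 := by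
          rcases le_or_gt (ringKrullDim S) 0 with h | h
          · rw [FPAux.rdepth_eq_zero_of_dim_le_zero h] at h1S
            exact absurd h1S (by decide)
          · exact le_antisymm (hdS.trans hdR1.le) (FPAux.one_le_of_pos h)
        have hdT1 : ringKrullDim T = 1 := by
          rcases le_or_gt (ringKrullDim T) 0 with h | h
          · rw [FPAux.rdepth_eq_zero_of_dim_le_zero h] at h1T
            exact absurd h1T (by decide)
          · exact le_antisymm (hdT.trans hdR1.le) (FPAux.one_le_of_pos h)
        have hrS1 : rdepth S = 1 :=
          le_antisymm (FPAux.rdepth_le_one_of_dim_le_one hdS1.le) h1S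
        have hrT1 : rdepth T = 1 :=
          le_antisymm (FPAux.rdepth_le_one_of_dim_le_one hdT1.le) h1T
        refine ⟨hdR1.le, ?_, ?_, hdS1.trans hdR1.symm, hdT1.trans hdR1.symm⟩
        · show (↑(rdepth S) : WithBot ℕ∞) = ringKrullDim S
          rw [hrS1, hdS1]; rfl
        · show (↑(rdepth T) : WithBot ℕ∞) = ringKrullDim T
          rw [hrT1, hdT1]; rfl
      · rintro ⟨-, cmS, cmT, hds, hdt⟩
        have hrS1 : rdepth S = 1 := by
          have h : (↑(rdepth S) : WithBot ℕ∞) = 1 := cmS.trans (hds.trans hdR1)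
          exact_mod_cast h
        have hrT1 : rdepth T = 1 := by
          have h : (↑(rdepth T) : WithBot ℕ∞) = 1 := cmT.trans (hdt.trans hdR1)
          exact_mod_cast h
        have h1R : 1 ≤ rdepth ↥(fiberProd πS πT) := hiff.2 ⟨hrS1.ge, hrT1.ge⟩
        have hr1 : rdepth ↥(fiberProd πS πT) = 1 := le_antisymm hdep1 h1R
        show (↑(rdepth ↥(fiberProd πS πT)) : WithBot ℕ∞) = ringKrullDim ↥(fiberProd πS πT)
        rw [hr1, hdR1]; rfl
    · -- dimension ≥ 2 case: both sides false
      apply iff_of_false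
      · intro hcm
        have hle : (↑(rdepth ↥(fiberProd πS πT)) : WithBot ℕ∞) ≤ 1 := by
          exact_mod_cast hdep1
        rw [hcm] at hle
        exact absurd hle (not_le.2 hc1)
      · rintro ⟨h1, -⟩
        exact absurd h1 (not_le.2 hc1)
end

section
/- A commutative noetherian local ring R with residue field k is isomorphic to a non-trivial fiber product S ×_k T of local rings S, T with common residue field k if and only if its maximal ideal m_R is decomposable, i.e., m_R = I ⊕ J for non-zero ideals I, J of R. -/
open IsLocalRing

universe u

structure NontrivFiberRep (R : Type u) [CommRing R] (k : Type u) [Field k] :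
    Type (u + 1) where
  S : Type u
  T : Type u
  [instS : CommRing S]
  [instT : CommRing T]
  [locS : IsLocalRing S]
  [locT : IsLocalRing T]
  [noethS : IsNoetherianRing S]
  [noethT : IsNoetherianRing T]
  πS : S →+* k
  πT : T →+* k
  surjS : Function.Surjective πS
  surjT : Function.Surjective πT
  kerS : RingHom.ker πS = IsLocalRing.maximalIdeal S
  kerT : RingHom.ker πT = IsLocalRing.maximalIdeal T
  ntS : IsLocalRing.maximalIdeal S ≠ ⊥
  ntT : IsLocalRing.maximalIdeal T ≠ ⊥
  iso : R ≃+* ↥(fiberProd πS πT)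

section Aux

variable {R : Type u} [CommRing R] [IsLocalRing R]
    {k : Type u} [Field k] (π : R →+* k) (hker : RingHom.ker π = maximalIdeal R)

lemma aux_quot_local (J : Ideal R) (hJ : J ≠ ⊤) : IsLocalRing (R ⧸ J) :=
  haveI := Ideal.Quotient.nontrivial_iff.mpr hJ
  IsLocalRing.of_surjective' (Ideal.Quotient.mk J) Ideal.Quotient.mk_surjective

lemma aux_ker_quot (J : Ideal R) (hJ : J ≤ maximalIdeal R) :
    haveI := aux_quot_local J (ne_top_of_le_ne_top (maximalIdeal.isMaximal R).ne_top hJ)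
    RingHom.ker (Ideal.Quotient.lift J π (fun a ha => by
      rw [← RingHom.mem_ker, hker]; exact hJ ha)) = maximalIdeal (R ⧸ J) := by
  ext x
  obtain ⟨r, rfl⟩ := Ideal.Quotient.mk_surjective x
  simp only [RingHom.mem_ker, Ideal.Quotient.lift_mk, mem_maximalIdeal, mem_nonunits_iff]
  constructor
  · intro h hu
    obtain ⟨s, hs⟩ := Ideal.Quotient.mk_surjective ((hu.unit⁻¹ : Units _) : R ⧸ J)
    have : Ideal.Quotient.mk J (r * s - 1) = 0 := by
      rw [map_sub, map_mul, hs, hu.mul_val_inv, map_one, sub_self]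
    have h2 : r * s - 1 ∈ J := Ideal.Quotient.eq_zero_iff_mem.mp this
    have hrm : r ∈ maximalIdeal R := by rw [← hker]; exact h
    have : (1 : R) ∈ maximalIdeal R := by
      have := (maximalIdeal R).sub_mem ((maximalIdeal R).mul_mem_right s hrm) (hJ h2)
      simpa using this
    exact (maximalIdeal.isMaximal R).ne_top ((Ideal.eq_top_iff_one _).mpr this)
  · intro h
    by_contra hne
    have hr : r ∉ maximalIdeal R := by rw [← hker]; exact hne
    exact h ((notMem_maximalIdeal.mp hr).map (Ideal.Quotient.mk J))

end Aux

section Back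
variable {R : Type u} [CommRing R] [IsLocalRing R] [IsNoetherianRing R]
    {k : Type u} [Field k]

lemma aux_back (π : R →+* k)
    (hπ : Function.Surjective π) (hker : RingHom.ker π = maximalIdeal R)
    (I J : Ideal R) (hI : I ≠ ⊥) (hJ : J ≠ ⊥)
    (hsup : I ⊔ J = maximalIdeal R) (hinf : I ⊓ J = ⊥) :
    Nonempty (NontrivFiberRep R k) := by
  have hIm : I ≤ maximalIdeal R := hsup ▸ le_sup_left
  have hJm : J ≤ maximalIdeal R := hsup ▸ le_sup_right
  haveI locS : IsLocalRing (R ⧸ J) :=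
    aux_quot_local J (ne_top_of_le_ne_top (maximalIdeal.isMaximal R).ne_top hJm)
  haveI locT : IsLocalRing (R ⧸ I) :=
    aux_quot_local I (ne_top_of_le_ne_top (maximalIdeal.isMaximal R).ne_top hIm)
  set πS : (R ⧸ J) →+* k := Ideal.Quotient.lift J π (fun a ha => by
      rw [← RingHom.mem_ker, hker]; exact hJm ha) with hπS
  set πT : (R ⧸ I) →+* k := Ideal.Quotient.lift I π (fun a ha => by
      rw [← RingHom.mem_ker, hker]; exact hIm ha) with hπT
  have kerS := aux_ker_quot π hker J hJm
  have kerT := aux_ker_quot π hker I hIm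
  -- the map into the fiber product
  set φ₀ : R →+* (R ⧸ J) × (R ⧸ I) := (Ideal.Quotient.mk J).prod (Ideal.Quotient.mk I) with hφ₀
  have hmem : ∀ r : R, φ₀ r ∈ fiberProd πS πT := by
    intro r
    show πS (Ideal.Quotient.mk J r) = πT (Ideal.Quotient.mk I r)
    simp [hπS, hπT]
  set φ : R →+* fiberProd πS πT := φ₀.codRestrict _ hmem with hφ
  have hbij : Function.Bijective φ := by
    constructor
    · intro a b hab
      have h1 : Ideal.Quotient.mk J a = Ideal.Quotient.mk J b := congrArg (Prod.fst ∘ Subtype.val) hab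
      have h2 : Ideal.Quotient.mk I a = Ideal.Quotient.mk I b := congrArg (Prod.snd ∘ Subtype.val) hab
      have : a - b ∈ I ⊓ J :=
        ⟨Ideal.Quotient.eq.mp h2, Ideal.Quotient.eq.mp h1⟩
      rw [hinf, Ideal.mem_bot, sub_eq_zero] at this
      exact this
    · rintro ⟨⟨a, b⟩, hab⟩
      obtain ⟨r, rfl⟩ := Ideal.Quotient.mk_surjective a
      obtain ⟨s, rfl⟩ := Ideal.Quotient.mk_surjective b
      have : π r = π s := hab
      have hrs : r - s ∈ I ⊔ J := by
        rw [hsup, ← hker, RingHom.mem_ker, map_sub, this, sub_self]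
      rw [Submodule.mem_sup] at hrs
      obtain ⟨i, hi, j, hj, hij⟩ := hrs
      refine ⟨r - j, ?_⟩
      apply Subtype.ext
      apply Prod.ext
      · show Ideal.Quotient.mk J (r - j) = Ideal.Quotient.mk J r
        rw [map_sub, Ideal.Quotient.eq_zero_iff_mem.mpr hj, sub_zero]
      · show Ideal.Quotient.mk I (r - j) = Ideal.Quotient.mk I s
        rw [Ideal.Quotient.eq]
        have : r - j - s = i := by linear_combination -hij
        rw [this]; exact hi
  refine ⟨⟨R ⧸ J, R ⧸ I, πS, πT, ?_, ?_, kerS, kerT, ?_, ?_, RingEquiv.ofBijective φ hbij⟩⟩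
  · exact fun x => by obtain ⟨r, hr⟩ := hπ x; exact ⟨Ideal.Quotient.mk J r, hr⟩
  · exact fun x => by obtain ⟨r, hr⟩ := hπ x; exact ⟨Ideal.Quotient.mk I r, hr⟩
  · rw [← kerS]
    obtain ⟨i, hiI, hine⟩ := Submodule.exists_mem_ne_zero_of_ne_bot hI
    intro hbot
    have : Ideal.Quotient.mk J i ∈ RingHom.ker πS := by
      show πS _ = 0
      simp only [hπS, Ideal.Quotient.lift_mk]
      rw [← RingHom.mem_ker, hker]; exact hIm hiI
    rw [hbot, Ideal.mem_bot, Ideal.Quotient.eq_zero_iff_mem] at this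
    exact hine (by rw [← Ideal.mem_bot, ← hinf]; exact ⟨hiI, this⟩)
  · rw [← kerT]
    obtain ⟨j, hjJ, hjne⟩ := Submodule.exists_mem_ne_zero_of_ne_bot hJ
    intro hbot
    have : Ideal.Quotient.mk I j ∈ RingHom.ker πT := by
      show πT _ = 0
      simp only [hπT, Ideal.Quotient.lift_mk]
      rw [← RingHom.mem_ker, hker]; exact hJm hjJ
    rw [hbot, Ideal.mem_bot, Ideal.Quotient.eq_zero_iff_mem] at this
    exact hjne (by rw [← Ideal.mem_bot, ← hinf]; exact ⟨this, hjJ⟩)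

end Back

section Fwd
variable {R : Type u} [CommRing R] [IsLocalRing R] [IsNoetherianRing R]
    {k : Type u} [Field k]

lemma aux_fwd (rep : NontrivFiberRep R k) :
    ∃ I J : Ideal R, I ≠ ⊥ ∧ J ≠ ⊥ ∧ I ⊔ J = maximalIdeal R ∧ I ⊓ J = ⊥ := by
  letI := rep.instS; letI := rep.instT; letI := rep.locS; letI := rep.locT
  set e := rep.iso with he
  set P := fiberProd rep.πS rep.πT with hP
  set f1 : R →+* rep.S := (RingHom.fst _ _).comp (P.subtype.comp (e : R →+* P)) with hf1
  set f2 : R →+* rep.T := (RingHom.snd _ _).comp (P.subtype.comp (e : R →+* P)) with hf2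
  have hval : ∀ r : R, ((e r : P) : rep.S × rep.T) = (f1 r, f2 r) := fun r => rfl
  have hprop : ∀ x : P, rep.πS (x : rep.S × rep.T).1 = rep.πT (x : rep.S × rep.T).2 :=
    fun x => x.2
  refine ⟨RingHom.ker f2, RingHom.ker f1, ?_, ?_, ?_, ?_⟩
  · obtain ⟨s, hs, hsne⟩ := Submodule.exists_mem_ne_zero_of_ne_bot rep.ntS
    have hs0 : rep.πS s = 0 := by
      rw [← RingHom.mem_ker, rep.kerS]; exact hs
    set x : P := ⟨(s, 0), show rep.πS s = rep.πT 0 by simp [hs0]⟩ with hx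
    intro hbot
    have hmem : e.symm x ∈ RingHom.ker f2 := by
      rw [RingHom.mem_ker]
      show ((e (e.symm x) : P) : rep.S × rep.T).2 = 0
      rw [RingEquiv.apply_symm_apply]
    rw [hbot, Ideal.mem_bot] at hmem
    have : x = 0 := by rw [← map_zero e, ← hmem, RingEquiv.apply_symm_apply]
    exact hsne (congrArg (Prod.fst ∘ Subtype.val) this)
  · obtain ⟨t, ht, htne⟩ := Submodule.exists_mem_ne_zero_of_ne_bot rep.ntT
    have ht0 : rep.πT t = 0 := by
      rw [← RingHom.mem_ker, rep.kerT]; exact ht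
    set x : P := ⟨(0, t), show rep.πS 0 = rep.πT t by simp [ht0]⟩ with hx
    intro hbot
    have hmem : e.symm x ∈ RingHom.ker f1 := by
      rw [RingHom.mem_ker]
      show ((e (e.symm x) : P) : rep.S × rep.T).1 = 0
      rw [RingEquiv.apply_symm_apply]
    rw [hbot, Ideal.mem_bot] at hmem
    have : x = 0 := by rw [← map_zero e, ← hmem, RingEquiv.apply_symm_apply]
    exact htne (congrArg (Prod.snd ∘ Subtype.val) this)
  · apply le_antisymm
    · apply sup_le
      · intro r hr
        rw [RingHom.mem_ker] at hr
        rw [mem_maximalIdeal, mem_nonunits_iff]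
        intro hu
        exact not_isUnit_zero (hr ▸ hu.map f2)
      · intro r hr
        rw [RingHom.mem_ker] at hr
        rw [mem_maximalIdeal, mem_nonunits_iff]
        intro hu
        exact not_isUnit_zero (hr ▸ hu.map f1)
    · intro r hr
      have h_eq : rep.πS (f1 r) = rep.πT (f2 r) := hprop (e r)
      have hs0 : rep.πS (f1 r) = 0 := by
        by_contra hne
        have hsu : IsUnit (f1 r) :=
          notMem_maximalIdeal.mp (fun h => hne (by rw [← rep.kerS] at h; exact RingHom.mem_ker.mp h))
        have htu : IsUnit (f2 r) :=
          notMem_maximalIdeal.mp (fun h => by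
            rw [← rep.kerT, RingHom.mem_ker] at h
            exact hne (h_eq.trans h ▸ rfl))
        obtain ⟨s', hss'⟩ := hsu.exists_right_inv
        obtain ⟨t', htt'⟩ := htu.exists_right_inv
        have hk : rep.πS s' = rep.πT t' := by
          have h1 : rep.πS (f1 r) * rep.πS s' = 1 := by rw [← map_mul, hss', map_one]
          have h2 : rep.πS (f1 r) * rep.πT t' = 1 := by
            rw [h_eq, ← map_mul, htt', map_one]
          exact mul_left_cancel₀ hne (h1.trans h2.symm)
        have hunit : IsUnit (e r) := by
          refine IsUnit.of_mul_eq_one (a := e r) ⟨(s', t'), hk⟩ ?_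
          apply Subtype.ext
          apply Prod.ext
          · show f1 r * s' = 1; exact hss'
          · show f2 r * t' = 1; exact htt'
        have hru : IsUnit r := by
          have := hunit.map (e.symm : P →+* R)
          simpa using this
        exact absurd hru (by rwa [mem_maximalIdeal, mem_nonunits_iff] at hr)
      have ht0 : rep.πT (f2 r) = 0 := h_eq ▸ hs0
      set a : P := ⟨(f1 r, 0), show rep.πS (f1 r) = rep.πT 0 by simp [hs0]⟩ with ha
      set b : P := ⟨(0, f2 r), show rep.πS 0 = rep.πT (f2 r) by simp [ht0]⟩ with hb
      have haI : e.symm a ∈ RingHom.ker f2 := by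
        rw [RingHom.mem_ker]
        show ((e (e.symm a) : P) : rep.S × rep.T).2 = 0
        rw [RingEquiv.apply_symm_apply]
      have hbJ : e.symm b ∈ RingHom.ker f1 := by
        rw [RingHom.mem_ker]
        show ((e (e.symm b) : P) : rep.S × rep.T).1 = 0
        rw [RingEquiv.apply_symm_apply]
      have hr_eq : r = e.symm a + e.symm b := by
        apply e.injective
        rw [map_add, RingEquiv.apply_symm_apply, RingEquiv.apply_symm_apply]
        apply Subtype.ext
        apply Prod.ext
        · show f1 r = f1 r + 0; rw [add_zero]
        · show f2 r = 0 + f2 r; rw [zero_add]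
      rw [hr_eq]
      exact Submodule.add_mem_sup haI hbJ
  · rw [eq_bot_iff]
    intro r hr
    have h1 : f2 r = 0 := RingHom.mem_ker.mp (Submodule.mem_inf.mp hr).1
    have h2 : f1 r = 0 := RingHom.mem_ker.mp (Submodule.mem_inf.mp hr).2
    rw [Ideal.mem_bot]
    apply e.injective
    rw [map_zero]
    apply Subtype.ext
    apply Prod.ext
    · exact h2
    · exact h1

end Fwd

/-- A noetherian local ring with residue field `k` is a non-trivial fiber product
`S ×_k T` iff its maximal ideal is decomposable. -/
theorem stmt_14 (R : Type u) [CommRing R] [IsLocalRing R] [IsNoetherianRing R]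
    (k : Type u) [Field k] (π : R →+* k)
    (hπ : Function.Surjective π) (hker : RingHom.ker π = maximalIdeal R) :
    Nonempty (NontrivFiberRep R k) ↔
      ∃ I J : Ideal R, I ≠ ⊥ ∧ J ≠ ⊥ ∧ I ⊔ J = maximalIdeal R ∧ I ⊓ J = ⊥ := by
  constructor
  · rintro ⟨rep⟩; exact aux_fwd rep
  · rintro ⟨I, J, hI, hJ, hsup, hinf⟩; exact aux_back π hπ hker I J hI hJ hsup hinf
end
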